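/- Let C be a chain system and suppose P is covered by Q in the prefix order ≤_pre on equivalence classes of prefixes of C. Then for every p ∈ P there exists a unique letter a of the alphabet such that pa ∈ Q, and moreover this letter a depends only on the pair (P,Q), not on the choice of representative p ∈ P. -/
import Mathlib


/-! Basic notions for chain systems on words over an alphabet. -/

namespace ChainSys

variable {A : Type*}

/-- `p` is a prefix (initial segment) of some word of `C`. -/
def PreWord (C : Set (List A)) (p : List A) : Prop := ∃ x, p ++ x ∈ C

/-- `x` is a postfix (final segment) of some word of `C`. -/
def PostWord (C : Set (List A)) (x : List A) : Prop := ∃ p, p ++ x ∈ C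

/-- Two prefixes of `C` are equivalent when some common postfix completes both into `C`. -/
def PreEquiv (C : Set (List A)) (p₁ p₂ : List A) : Prop :=
  ∃ x, p₁ ++ x ∈ C ∧ p₂ ++ x ∈ C

/-- Two postfixes of `C` are equivalent when some common prefix completes both into `C`. -/
def PostEquiv (C : Set (List A)) (x₁ x₂ : List A) : Prop :=
  ∃ p, p ++ x₁ ∈ C ∧ p ++ x₂ ∈ C

/-- A chain system: (i) bounded word lengths; (ii) whether `p ++ x ∈ C` depends only on the
equivalence classes of the prefix `p` and the postfix `x`; (iii) unique single-letter
substitution. -/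
def IsChainSystem (C : Set (List A)) : Prop :=
  (∃ N, ∀ w ∈ C, w.length ≤ N) ∧
  (∀ p₁ p₂ x₁ x₂, PreEquiv C p₁ p₂ → PostEquiv C x₁ x₂ → p₁ ++ x₁ ∈ C → p₂ ++ x₂ ∈ C) ∧
  (∀ (p : List A) (a : A) (w x : List A), p ++ [a] ++ x ∈ C → p ++ w ++ x ∈ C → w = [a])

/-- The prefix order on (equivalence classes of) prefixes of `C`, at the level of
representatives: `P ≤ Q` iff some representative of `P` is an initial segment of some
representative of `Q`. -/
def LePre (C : Set (List A)) (p q : List A) : Prop :=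
  ∃ p' q', PreEquiv C p p' ∧ PreEquiv C q q' ∧ p' <+: q'

/-- Cover relations of the prefix order, at the level of representatives. -/
def CoverPre (C : Set (List A)) (p q : List A) : Prop :=
  LePre C p q ∧ ¬ PreEquiv C p q ∧
    ∀ r, LePre C p r → LePre C r q → PreEquiv C r p ∨ PreEquiv C r q

end ChainSys

open ChainSys

namespace ChainSysAux

variable {A : Type*} {C : Set (List A)}

lemma preEquiv_symm {p q : List A} (h : PreEquiv C p q) : PreEquiv C q p :=
  let ⟨x, h1, h2⟩ := h; ⟨x, h2, h1⟩

lemma preEquiv_trans (hC : IsChainSystem C) {p q r : List A}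
    (h1 : PreEquiv C p q) (h2 : PreEquiv C q r) : PreEquiv C p r := by
  obtain ⟨x, hpx, hqx⟩ := h1
  obtain ⟨y, hqy, hry⟩ := h2
  exact ⟨y, hC.2.1 q p y y ⟨x, hqx, hpx⟩ ⟨q, hqy, hqy⟩ hqy, hry⟩

/-- Step lemma: climb from a representative prefix of `p` inside `q'` until the next
letter lands in the class of `q`. -/
lemma exists_step (hC : IsChainSystem C) {p q : List A} (hpq : CoverPre C p q) :
    ∀ (n : ℕ) (p₀ q' : List A), q'.length - p₀.length ≤ n → PreEquiv C p p₀ →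
      PreEquiv C q q' → p₀ <+: q' →
      ∃ p'' a, PreEquiv C p p'' ∧ PreEquiv C (p'' ++ [a]) q := by
  intro n
  induction n with
  | zero =>
    intro p₀ q' hlen hpp₀ hqq' hpre
    exfalso
    obtain ⟨t, rfl⟩ := hpre
    have : t = [] := by
      have := hlen; simp only [List.length_append] at this
      exact List.eq_nil_of_length_eq_zero (by omega)
    have : p₀ = p₀ ++ t := by simp [this]
    exact hpq.2.1 (preEquiv_trans hC hpp₀ (this ▸ preEquiv_symm hqq'))
  | succ n ih =>
    intro p₀ q' hlen hpp₀ hqq' hpre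
    obtain ⟨t, ht⟩ := hpre
    cases t with
    | nil =>
      exfalso
      have : p₀ = q' := by simpa using ht
      exact hpq.2.1 (preEquiv_trans hC hpp₀ (this ▸ preEquiv_symm hqq'))
    | cons a t' =>
      obtain ⟨y, hqy, hq'y⟩ := hqq'
      have hmem : (p₀ ++ [a]) ++ (t' ++ y) ∈ C := by
        have : q' ++ y = (p₀ ++ [a]) ++ (t' ++ y) := by
          rw [← ht]; simp
        rwa [this] at hq'y
      have hrr : PreEquiv C (p₀ ++ [a]) (p₀ ++ [a]) := ⟨t' ++ y, hmem, hmem⟩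
      have hrq' : p₀ ++ [a] <+: q' := ⟨t', by rw [← ht]; simp⟩
      have hcase := hpq.2.2 (p₀ ++ [a])
        ⟨p₀, p₀ ++ [a], hpp₀, hrr, ⟨[a], rfl⟩⟩
        ⟨p₀ ++ [a], q', hrr, ⟨y, hqy, hq'y⟩, hrq'⟩
      rcases hcase with hrp | hrq
      · refine ih (p₀ ++ [a]) q' ?_ (preEquiv_symm hrp) ⟨y, hqy, hq'y⟩ hrq'
        have h1 := hrq'.length_le
        simp only [List.length_append, List.length_singleton] at h1 ⊢
        omega
      · exact ⟨p₀, a, hpp₀, hrq⟩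

end ChainSysAux

open ChainSysAux

/-- If `P ⋖ Q` in the prefix order of a chain system `C`, then for every
representative `p'` of `P` there is a unique letter `a` with `p'a ∈ Q`; moreover the letter
`a` depends only on the pair of classes, not on the representative. -/
theorem statement_3 {A : Type*} (C : Set (List A)) (h : IsChainSystem C)
    (p q : List A) (hpq : CoverPre C p q) :
    ∃ a : A, ∀ p', PreEquiv C p p' →
      PreEquiv C (p' ++ [a]) q ∧ ∀ b : A, PreEquiv C (p' ++ [b]) q → b = a := by
  obtain ⟨p₀, q', hpp₀, hqq', hpre⟩ := hpq.1
  obtain ⟨p'', a, hpp'', haq⟩ :=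
    exists_step h hpq q'.length p₀ q' (by omega) hpp₀ hqq' hpre
  refine ⟨a, fun p' hp' => ?_⟩
  have hpp' : PreEquiv C p'' p' := preEquiv_trans h (preEquiv_symm hpp'') hp'
  obtain ⟨x, hx1, hx2⟩ := haq
  have hx1' : p'' ++ ([a] ++ x) ∈ C := by rwa [← List.append_assoc]
  have h1 : p' ++ ([a] ++ x) ∈ C :=
    h.2.1 p'' p' ([a] ++ x) ([a] ++ x) hpp' ⟨p'', hx1', hx1'⟩ hx1'
  have hpa_q : PreEquiv C (p' ++ [a]) q := ⟨x, by rwa [List.append_assoc], hx2⟩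
  refine ⟨hpa_q, fun b hb => ?_⟩
  obtain ⟨y, hy1, hy2⟩ := hb
  have hab : PreEquiv C (p' ++ [a]) (p' ++ [b]) :=
    preEquiv_trans h hpa_q (preEquiv_symm ⟨y, hy1, hy2⟩)
  have h2 : (p' ++ [b]) ++ x ∈ C :=
    h.2.1 (p' ++ [a]) (p' ++ [b]) x x hab ⟨q, hx2, hx2⟩ (by rwa [List.append_assoc])
  have := h.2.2 p' a [b] x (by rw [List.append_assoc]; exact h1) h2
  simpa using this
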